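/- Let k ≥ 2 be an integer and let A ⊆ Σ_k^* be an infinite k-arid set. Then there exists a word v ∈ Σ_k^* such that A ∩ vΣ_k^* = ⋃_{i=1}^{p} {v w^l u_i : l ∈ ℕ₀} for some integer p ≥ 1 and words w, u_1, …, u_p ∈ Σ_k^* with w ≠ ε; in particular, A ∩ vΣ_k^* is k-arid of rank ≤ 1. Here vΣ_k^* denotes the set of words having v as a prefix. -/

import Mathlib

open Filter Topology

/-- The `k`-kernel of a sequence: all subsequences `n ↦ f (k^l * n + r)` with `0 ≤ r < k^l`. -/
def kKernel {Ω : Type*} (k : ℕ) (f : ℕ → Ω) : Set (ℕ → Ω) :=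
  {g | ∃ l r : ℕ, r < k ^ l ∧ g = fun n => f (k ^ l * n + r)}

/-- A sequence is `k`-automatic if its `k`-kernel is finite. -/
def IsKAutomatic {Ω : Type*} (k : ℕ) (f : ℕ → Ω) : Prop :=
  (kKernel k f).Finite

/-- A sequence `f` is weakly periodic if every restriction `n ↦ f (a n + b)` (with `a ≥ 1`)
agrees along two distinct residues `r ≠ r'` modulo some `q ≥ 1`. -/
def WeaklyPeriodic {Ω : Type*} (f : ℕ → Ω) : Prop :=
  ∀ a b : ℕ, 0 < a → ∃ q r r' : ℕ, 0 < q ∧ r ≠ r' ∧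
    ∀ n : ℕ, f (a * (q * n + r) + b) = f (a * (q * n + r') + b)

/-- A sequence is periodic (with some period `q ≥ 1`). -/
def PeriodicSeq {Ω : Type*} (f : ℕ → Ω) : Prop :=
  ∃ q : ℕ, 0 < q ∧ ∀ n : ℕ, f (n + q) = f n

/-- The `l`-fold concatenation of the word `w` with itself. -/
def wpow {σ : Type*} (w : List σ) (l : ℕ) : List σ := (List.replicate l w).flatten

/-- The integer whose base-`k` expansion (most significant digit first) is the word `u`. -/
def wordVal (k : ℕ) (u : List (Fin k)) : ℕ :=
  u.foldl (fun acc d => acc * k + (d : ℕ)) 0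

/-- A basic `k`-arid set of words of rank `≤ r`:
`{v₀ w₁^{l₁} v₁ w₂^{l₂} ⋯ w_r^{l_r} v_r : l₁, …, l_r ∈ ℕ}`. -/
def IsBasicArid (k r : ℕ) (A : Set (List (Fin k))) : Prop :=
  ∃ (v : Fin (r + 1) → List (Fin k)) (w : Fin r → List (Fin k)),
    A = {u | ∃ l : Fin r → ℕ,
      u = (List.ofFn fun i : Fin r => v i.castSucc ++ wpow (w i) (l i)).flatten
        ++ v (Fin.last r)}

/-- A `k`-arid set of words of rank `≤ r` is a finite union of basic ones. -/
def IsArid (k r : ℕ) (A : Set (List (Fin k))) : Prop :=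
  ∃ (m : ℕ) (B : Fin m → Set (List (Fin k))),
    (∀ i, IsBasicArid k r (B i)) ∧ A = ⋃ i, B i

/-- A set `E ⊆ ℕ` is `k`-arid of rank `≤ r` if it is the set of values of a `k`-arid
set of words of rank `≤ r`. -/
def IsAridNat (k r : ℕ) (E : Set ℕ) : Prop :=
  ∃ A : Set (List (Fin k)), IsArid k r A ∧ E = wordVal k '' A

/-!
An arid set `A` is regular: it is a finite union of products of singletons and stars `{w}∗`,
so it has only finitely many left quotients. It also has polynomial growth: it contains at most
`C (n + 1) ^ r` words of length `n`.

Among the infinite left quotients of `A`, take one, `Q = v⁻¹A`, whose set of infinite left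
quotients is minimal. Then every infinite quotient of `Q` leads back to `Q`; in particular
`z⁻¹Q = Q` for some nonempty `z`. If two distinct words `t₁ ≠ t₂` of equal length both had
infinite quotients, then returning to `Q` after each would give two distinct loops `c ≠ d` of
equal length at `Q`, and the `2 ^ m` words `v (c|d)^m y` in `A` would contradict polynomial
growth. So `z` is the only word of length `|z|` with an infinite quotient, the words of `Q` not
starting with `z` form a finite set `R`, and `Q = z∗ R`.
-/

open Computability

section Wpow

variable {α : Type*}

lemma wpow_succ (w : List α) (l : ℕ) : wpow w (l + 1) = w ++ wpow w l := by
  simp [wpow, List.replicate_succ]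

@[simp] lemma wpow_nil (l : ℕ) : wpow ([] : List α) l = [] := by
  simp [wpow]

@[simp] lemma length_wpow (w : List α) (l : ℕ) : (wpow w l).length = l * w.length := by
  simp [wpow, List.sum_replicate]

lemma prefix_wpow (w : List α) {n : ℕ} (hn : n ≠ 0) : w <+: wpow w n := by
  obtain ⟨n, rfl⟩ := Nat.exists_eq_succ_of_ne_zero hn
  rw [wpow_succ]
  exact List.prefix_append _ _

end Wpow

lemma List.eq_of_flatMap_eq {α β : Type*} {g : β → List α} (hg : Function.Injective g)
    (hlen : ∀ a b, (g a).length = (g b).length) :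
    ∀ {bs bs' : List β}, bs.length = bs'.length → bs.flatMap g = bs'.flatMap g → bs = bs'
  | [], [], _, _ => rfl
  | b :: bs, b' :: bs', hl, h => by
    rw [List.flatMap_cons, List.flatMap_cons] at h
    obtain ⟨hb, hbs⟩ := List.append_inj h (hlen b b')
    rw [hg hb, List.eq_of_flatMap_eq hg hlen (by simpa using hl) hbs]

lemma exists_mul_pow_lt_two_pow (D r : ℕ) : ∃ n, 0 < n ∧ D * n ^ r < 2 ^ n := by
  have hε : (0 : ℝ) < 1 / (D + 1) := by positivity
  obtain ⟨n, hn, hn1⟩ := (((tendsto_pow_const_div_const_pow_of_one_lt r one_lt_two).eventually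
    (gt_mem_nhds hε)).and (eventually_gt_atTop 0)).exists
  refine ⟨n, hn1, ?_⟩
  rw [div_lt_div_iff₀ (by positivity) (by positivity)] at hn
  have : (D : ℝ) * n ^ r < 2 ^ n := by nlinarith [pow_nonneg (Nat.cast_nonneg (α := ℝ) n) r]
  exact_mod_cast this

namespace Language

variable {α : Type*} {L M Q : Language α}

lemma isRegular_singleton (v : List α) : ({v} : Language α).IsRegular := by
  rw [isRegular_iff_finite_range_leftQuotient]
  refine ((Set.finite_Iic v.length).image (fun n => ({v.drop n} : Language α))).insert 0
    |>.subset ?_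
  rintro _ ⟨x, rfl⟩
  by_cases hx : x <+: v
  · refine Or.inr ⟨x.length, hx.length_le, ?_⟩
    ext y
    obtain ⟨t, rfl⟩ := hx
    simp only [mem_leftQuotient, List.drop_left]
    exact (List.append_cancel_left_eq x y t).to_iff.symm
  · refine Or.inl ?_
    ext y
    simp only [mem_leftQuotient]
    exact ⟨fun h => hx ⟨y, h⟩, fun h => h.elim⟩

lemma mem_leftQuotient_mul {x y : List α} :
    y ∈ (L * M).leftQuotient x ↔
      y ∈ L.leftQuotient x * M ∨
        ∃ s, (∃ p ∈ L, x = p ++ s) ∧ y ∈ M.leftQuotient s := by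
  simp only [mem_leftQuotient, mem_mul]
  constructor
  · rintro ⟨p, hp, q, hq, hpq⟩
    rcases List.append_eq_append_iff.1 hpq with ⟨s, rfl, rfl⟩ | ⟨s, rfl, rfl⟩
    · exact Or.inr ⟨s, ⟨p, hp, rfl⟩, hq⟩
    · exact Or.inl ⟨s, hp, q, hq, rfl⟩
  · rintro (⟨s, hs, q, hq, rfl⟩ | ⟨s, ⟨p, hp, rfl⟩, hs⟩)
    · exact ⟨x ++ s, hs, q, hq, by simp⟩
    · exact ⟨p, hp, s ++ y, hs, by simp⟩

theorem IsRegular.mul (hL : L.IsRegular) (hM : M.IsRegular) : (L * M).IsRegular := by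
  rw [isRegular_iff_finite_range_leftQuotient] at *
  refine ((hL.prod hM.finite_subsets).image fun PT : Language α × Set (Language α) =>
    ({y | y ∈ PT.1 * M ∨ ∃ N ∈ PT.2, y ∈ N} : Language α)).subset ?_
  rintro _ ⟨x, rfl⟩
  refine ⟨(L.leftQuotient x, M.leftQuotient '' {s | ∃ p ∈ L, x = p ++ s}),
    ⟨Set.mem_range_self x, Set.image_subset_range _ _⟩, ?_⟩
  refine Language.ext fun y => ?_
  rw [mem_leftQuotient_mul]
  change _ ∨ (∃ N ∈ M.leftQuotient '' _, y ∈ N) ↔ _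
  rw [Set.exists_mem_image]
  rfl

lemma mem_kstar_singleton {w x : List α} :
    x ∈ ({w} : Language α)∗ ↔ ∃ l, x = wpow w l := by
  rw [mem_kstar]
  constructor
  · rintro ⟨S, rfl, hS⟩
    exact ⟨S.length, congrArg List.flatten (List.eq_replicate_iff.2 ⟨rfl, hS⟩)⟩
  · rintro ⟨l, rfl⟩
    exact ⟨List.replicate l w, rfl, fun y hy => (List.eq_of_mem_replicate hy : y = w)⟩

lemma leftQuotient_kstar_singleton_self (w : List α) :
    ({w} : Language α)∗.leftQuotient w = {w}∗ := by
  refine Language.ext fun y => ?_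
  simp only [mem_leftQuotient, mem_kstar_singleton]
  constructor
  · rintro ⟨_ | l, hl⟩
    · exact ⟨0, (List.append_eq_nil_iff.1 hl).2⟩
    · exact ⟨l, by simpa [wpow_succ] using hl⟩
  · rintro ⟨l, rfl⟩
    exact ⟨l + 1, (wpow_succ w l).symm⟩

lemma leftQuotient_kstar_singleton_eq_zero_or {w : List α} (hw : w ≠ []) (x : List α) :
    ({w} : Language α)∗.leftQuotient x = 0 ∨
      ∃ x', x' <+: w ∧
        ({w} : Language α)∗.leftQuotient x = ({w} : Language α)∗.leftQuotient x' := by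
  by_cases hwx : w <+: x
  · obtain ⟨x', rfl⟩ := hwx
    rw [leftQuotient_append, leftQuotient_kstar_singleton_self]
    exact leftQuotient_kstar_singleton_eq_zero_or hw x'
  by_cases hxw : x <+: w
  · exact Or.inr ⟨x, hxw, rfl⟩
  refine Or.inl (Language.ext fun y => iff_of_false ?_ (notMem_zero y))
  rw [mem_leftQuotient, mem_kstar_singleton]
  rintro ⟨_ | l, hl⟩
  · exact hxw ((List.append_eq_nil_iff.1 hl).1 ▸ List.nil_prefix)
  · rw [wpow_succ] at hl
    rcases List.prefix_or_prefix_of_prefix (List.prefix_append x y) ⟨_, hl.symm⟩ with h | h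
    · exact hxw h
    · exact hwx h
termination_by x.length
decreasing_by
  subst_vars
  simpa using List.length_pos_iff.2 hw

theorem isRegular_kstar_singleton (w : List α) : ({w} : Language α)∗.IsRegular := by
  rcases eq_or_ne w [] with rfl | hw
  · convert isRegular_singleton ([] : List α)
    refine Language.ext fun x => ?_
    simp only [mem_kstar_singleton, wpow_nil, exists_const]
    rfl
  rw [isRegular_iff_finite_range_leftQuotient]
  refine (((List.finite_toSet w.inits).image
    ({w} : Language α)∗.leftQuotient).insert 0).subset ?_
  rintro _ ⟨x, rfl⟩
  rcases leftQuotient_kstar_singleton_eq_zero_or hw x with h | ⟨x', hx', h⟩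
  · exact Or.inl h
  · exact Or.inr ⟨x', by simpa using hx', h.symm⟩

theorem isRegular_iSup {ι : Type*} [Finite ι] {L : ι → Language α}
    (h : ∀ i, (L i).IsRegular) : (⨆ i, L i).IsRegular := by
  simp only [isRegular_iff_finite_range_leftQuotient] at *
  refine ((Set.Finite.pi h).image fun f => ⨆ i, f i).subset ?_
  rintro _ ⟨x, rfl⟩
  refine ⟨fun i => (L i).leftQuotient x, fun i _ => Set.mem_range_self x, ?_⟩
  refine Language.ext fun y => ?_
  simp [mem_iSup]

lemma leftQuotient_wpow {z : List α} (hQ : Q.leftQuotient z = Q) (n : ℕ) :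
    Q.leftQuotient (wpow z n) = Q := by
  induction n with
  | zero => rfl
  | succ n ih => rw [wpow_succ, leftQuotient_append, hQ, ih]

lemma exists_infinite_leftQuotient_singleton [Finite α] (h : Set.Infinite L) :
    ∃ a, Set.Infinite (L.leftQuotient [a]) := by
  by_contra! hfin
  refine h (((Set.finite_iUnion fun a =>
    (Set.not_infinite.1 (hfin a)).image (a :: ·)).insert []).subset ?_)
  rintro (_ | ⟨a, x⟩) hx
  · exact Or.inl rfl
  · exact Or.inr (Set.mem_iUnion.2 ⟨a, x, hx, rfl⟩)

def IsRecurrent (Q : Language α) : Prop :=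
  ∀ t, Set.Infinite (Q.leftQuotient t) → ∃ s, Q.leftQuotient (t ++ s) = Q

theorem exists_isRecurrent_leftQuotient (hreg : L.IsRegular) (hinf : Set.Infinite L) :
    ∃ v, Set.Infinite (L.leftQuotient v) ∧ (L.leftQuotient v).IsRecurrent := by
  let reach : Language α → Set (Language α) :=
    fun M => {N | N ∈ Set.range M.leftQuotient ∧ Set.Infinite N}
  obtain ⟨_, ⟨⟨v, rfl⟩, hinfv⟩, hmin⟩ := Set.Finite.exists_minimalFor reach (reach L)
    (hreg.finite_range_leftQuotient.subset fun _ h => h.1) ⟨L, ⟨[], rfl⟩, hinf⟩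
  refine ⟨v, hinfv, fun t ht => ?_⟩
  have hsub : reach ((L.leftQuotient v).leftQuotient t) ⊆ reach (L.leftQuotient v) := by
    rintro _ ⟨⟨u, rfl⟩, hu⟩
    exact ⟨⟨t ++ u, leftQuotient_append _ _ _⟩, hu⟩
  obtain ⟨⟨s, hs⟩, -⟩ :=
    hmin ⟨⟨v ++ t, leftQuotient_append _ _ _⟩, ht⟩ hsub ⟨⟨[], rfl⟩, hinfv⟩
  exact ⟨s, by rw [leftQuotient_append, hs, leftQuotient_nil]⟩

lemma wpow_append_mem {z y : List α} (hQ : Q.leftQuotient z = Q) (hy : y ∈ Q) (l : ℕ) :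
    wpow z l ++ y ∈ Q := by
  rw [← mem_leftQuotient, leftQuotient_wpow hQ]
  exact hy

lemma exists_wpow_append_of_mem {z : List α} (hz : z ≠ []) (hQ : Q.leftQuotient z = Q)
    {x : List α} (hx : x ∈ Q) : ∃ l y, y ∈ Q ∧ ¬ z <+: y ∧ x = wpow z l ++ y := by
  by_cases hzx : z <+: x
  · obtain ⟨x', rfl⟩ := hzx
    rw [← mem_leftQuotient, hQ] at hx
    obtain ⟨l, y, hy, hzy, rfl⟩ := exists_wpow_append_of_mem hz hQ hx
    exact ⟨l + 1, y, hy, hzy, by rw [wpow_succ, List.append_assoc]⟩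
  · exact ⟨0, x, hx, hzx, rfl⟩
termination_by x.length
decreasing_by
  subst_vars
  simpa using List.length_pos_iff.2 hz

lemma finite_setOf_not_prefix [Finite α] {z : List α}
    (huniq : ∀ t, t.length = z.length → Set.Infinite (Q.leftQuotient t) → t = z) :
    {y | y ∈ Q ∧ ¬ z <+: y}.Finite := by
  have hT : {t : List α | t.length = z.length ∧ t ≠ z}.Finite :=
    (List.finite_length_eq α z.length).subset fun t ht => ht.1
  refine ((List.finite_length_lt α z.length).union <| hT.biUnion
    fun t ht => (Set.not_infinite.1 fun h => ht.2 (huniq t ht.1 h)).image (t ++ ·)).subset ?_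
  rintro y ⟨hy, hzy⟩
  rcases Nat.lt_or_ge y.length z.length with hlt | hge
  · exact Or.inl hlt
  · refine Or.inr (Set.mem_biUnion (x := y.take z.length) ⟨by simpa using hge, ?_⟩
      ⟨y.drop z.length, ?_, List.take_append_drop _ _⟩)
    · rintro h
      exact hzy (h ▸ List.take_prefix _ _)
    · show y.take z.length ++ y.drop z.length ∈ Q
      rwa [List.take_append_drop]

-- Only meaningful over a finite alphabet: `ncard` of an infinite set is `0`.
def HasPolynomialGrowth (L : Language α) : Prop :=
  ∃ C r : ℕ, ∀ n, {x | x ∈ L ∧ x.length = n}.ncard ≤ C * (n + 1) ^ r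

lemma flatMap_append_mem {β : Type*} {g : β → List α}
    (hg : ∀ b, Q.leftQuotient (g b) = Q) {y : List α} (hy : y ∈ Q) :
    ∀ bs : List β, bs.flatMap g ++ y ∈ Q
  | [] => hy
  | b :: bs => by
    rw [List.flatMap_cons, List.append_assoc, ← mem_leftQuotient, hg]
    exact flatMap_append_mem hg hy bs

theorem two_pow_le_ncard_of_leftQuotient_eq_self [Finite α] {v c d y : List α} (hcd : c ≠ d)
    (hlen : c.length = d.length) (hc : (L.leftQuotient v).leftQuotient c = L.leftQuotient v)
    (hd : (L.leftQuotient v).leftQuotient d = L.leftQuotient v) (hy : y ∈ L.leftQuotient v)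
    (m : ℕ) :
    2 ^ m ≤ {x | x ∈ L ∧ x.length = v.length + m * c.length + y.length}.ncard := by
  set g : Bool → List α := fun b => bif b then d else c
  have hg : Function.Injective g := by
    intro a b hab
    cases a <;> cases b
    all_goals first | rfl | exact absurd hab hcd | exact absurd hab.symm hcd
  have hglen : ∀ a b, (g a).length = (g b).length := by
    intro a b
    cases a <;> cases b <;> simp [g, hlen]
  set F : (Fin m → Bool) → List α := fun b => v ++ ((List.ofFn b).flatMap g ++ y)
  have hF : Function.Injective F := by
    intro b b' h
    exact List.ofFn_injective (List.eq_of_flatMap_eq hg hglen (by simp)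
      (List.append_cancel_right (List.append_cancel_left h)))
  have hsub : Set.range F ⊆ {x | x ∈ L ∧ x.length = v.length + m * c.length + y.length} := by
    rintro _ ⟨b, rfl⟩
    refine ⟨flatMap_append_mem (by rintro (_ | _) <;> assumption) hy _, ?_⟩
    have hgc : ∀ a, (g a).length = c.length := fun a => hglen a false
    simp [F, List.length_flatMap, hgc, Function.comp_def, List.ofFn_const]
    ring
  calc 2 ^ m = (Set.range F).ncard := by simp [Set.ncard_range_of_injective hF]
    _ ≤ _ := Set.ncard_le_ncard hsub ((List.finite_length_eq α _).subset fun x hx => hx.2)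

theorem HasPolynomialGrowth.eq_of_leftQuotient_eq_self [Finite α] (hL : L.HasPolynomialGrowth)
    {v c d : List α} (hne : (L.leftQuotient v).Nonempty) (hlen : c.length = d.length)
    (hc : (L.leftQuotient v).leftQuotient c = L.leftQuotient v)
    (hd : (L.leftQuotient v).leftQuotient d = L.leftQuotient v) : c = d := by
  by_contra hcd
  obtain ⟨C, r, hC⟩ := hL
  obtain ⟨y, hy⟩ := hne
  set K := v.length + c.length + y.length + 1 with hK
  obtain ⟨m, hm, hlt⟩ := exists_mul_pow_lt_two_pow (C * K ^ r) r
  have hle : v.length + m * c.length + y.length + 1 ≤ K * m := by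
    rw [hK]
    nlinarith
  have := (two_pow_le_ncard_of_leftQuotient_eq_self hcd hlen hc hd hy m).trans (hC _)
  have := Nat.mul_le_mul_left C (Nat.pow_le_pow_left hle r)
  rw [mul_pow, ← mul_assoc] at this
  omega

theorem HasPolynomialGrowth.eq_of_infinite_leftQuotient [Finite α] (hL : L.HasPolynomialGrowth)
    {v : List α} (hrec : (L.leftQuotient v).IsRecurrent) {t₁ t₂ : List α}
    (hlen : t₁.length = t₂.length)
    (h₁ : Set.Infinite ((L.leftQuotient v).leftQuotient t₁))
    (h₂ : Set.Infinite ((L.leftQuotient v).leftQuotient t₂)) : t₁ = t₂ := by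
  rcases eq_or_ne t₁ [] with rfl | ht₁
  · exact (List.length_eq_zero_iff.1 hlen.symm).symm
  have ht₂ : t₂ ≠ [] := fun h => ht₁ (List.length_eq_zero_iff.1 (by simp [hlen, h]))
  obtain ⟨s₁, hs₁⟩ := hrec t₁ h₁
  obtain ⟨s₂, hs₂⟩ := hrec t₂ h₂
  have hpos : ∀ {t s : List α}, t ≠ [] → (t ++ s).length ≠ 0 := by simp_all
  obtain ⟨y, hy⟩ := h₁.nonempty
  have hcd := hL.eq_of_leftQuotient_eq_self ⟨t₁ ++ y, hy⟩
    (c := wpow (t₁ ++ s₁) (t₂ ++ s₂).length) (d := wpow (t₂ ++ s₂) (t₁ ++ s₁).length)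
    (by simp [Nat.mul_comm]) (leftQuotient_wpow hs₁ _) (leftQuotient_wpow hs₂ _)
  have hp₁ := (List.prefix_append t₁ s₁).trans (prefix_wpow _ (hpos (s := s₂) ht₂))
  have hp₂ := (List.prefix_append t₂ s₂).trans (prefix_wpow _ (hpos (s := s₁) ht₁))
  rw [hcd] at hp₁
  exact (List.prefix_of_prefix_length_le hp₁ hp₂ hlen.le).eq_of_length hlen

theorem exists_leftQuotient_eq_wpow_append [Finite α] (hreg : L.IsRegular)
    (hL : L.HasPolynomialGrowth) (hinf : Set.Infinite L) :
    ∃ v z : List α, ∃ R : Set (List α), z ≠ [] ∧ R.Finite ∧ R.Nonempty ∧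
      ∀ x, x ∈ L.leftQuotient v ↔ ∃ l, ∃ y ∈ R, x = wpow z l ++ y := by
  obtain ⟨v, hinfv, hrec⟩ := exists_isRecurrent_leftQuotient hreg hinf
  obtain ⟨a, ha⟩ := exists_infinite_leftQuotient_singleton hinfv
  obtain ⟨s, hs⟩ := hrec [a] ha
  have hz : a :: s ≠ [] := List.cons_ne_nil a s
  refine ⟨v, a :: s, {y | y ∈ L.leftQuotient v ∧ ¬ a :: s <+: y}, hz,
    finite_setOf_not_prefix fun t ht h => hL.eq_of_infinite_leftQuotient hrec ht h ?_, ?_,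
    fun x => ⟨fun hx => ?_, ?_⟩⟩
  · rwa [← List.singleton_append, hs]
  · obtain ⟨x, hx⟩ := hinfv.nonempty
    obtain ⟨l, y, hy⟩ := exists_wpow_append_of_mem hz hs hx
    exact ⟨y, hy.1, hy.2.1⟩
  · obtain ⟨l, y, hy, hzy, rfl⟩ := exists_wpow_append_of_mem hz hs hx
    exact ⟨l, y, ⟨hy, hzy⟩, rfl⟩
  · rintro ⟨l, y, hy, rfl⟩
    exact wpow_append_mem hs hy.1 l

end Language

section Arid

variable {α : Type*}

def aridWord {r : ℕ} (v : Fin (r + 1) → List α) (w : Fin r → List α) (l : Fin r → ℕ) :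
    List α :=
  (List.ofFn fun i : Fin r => v i.castSucc ++ wpow (w i) (l i)).flatten ++ v (Fin.last r)

def aridLang {r : ℕ} (v : Fin (r + 1) → List α) (w : Fin r → List α) : Language α :=
  Set.range (aridWord v w)

lemma mem_aridLang {r : ℕ} {v : Fin (r + 1) → List α} {w : Fin r → List α} {x : List α} :
    x ∈ aridLang v w ↔ ∃ l, aridWord v w l = x :=
  Iff.rfl

lemma isBasicArid_iff {k r : ℕ} {B : Set (List (Fin k))} :
    IsBasicArid k r B ↔ ∃ (v : Fin (r + 1) → List (Fin k)) (w : Fin r → List (Fin k)),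
      B = aridLang v w := by
  simp only [IsBasicArid, aridLang, aridWord, Set.range, eq_comm (b := List.flatten _ ++ _)]

lemma aridWord_succ {r : ℕ} (v : Fin (r + 2) → List α) (w : Fin (r + 1) → List α)
    (l : Fin (r + 1) → ℕ) :
    aridWord v w l =
      v 0 ++ wpow (w 0) (l 0) ++ aridWord (Fin.tail v) (Fin.tail w) (Fin.tail l) := by
  simp [aridWord, List.ofFn_succ, Fin.tail, List.append_assoc]

lemma aridLang_zero (v : Fin 1 → List α) (w : Fin 0 → List α) : aridLang v w = {v 0} := by
  refine Language.ext fun x => ?_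
  show (∃ l, aridWord v w l = x) ↔ x = v 0
  simp [aridWord, Fin.last, eq_comm]

lemma aridLang_succ {r : ℕ} (v : Fin (r + 2) → List α) (w : Fin (r + 1) → List α) :
    aridLang v w = {v 0} * {w 0}∗ * aridLang (Fin.tail v) (Fin.tail w) := by
  refine Language.ext fun x => ?_
  simp only [Language.mem_mul, Language.mem_kstar_singleton, mem_aridLang]
  constructor
  · rintro ⟨l, rfl⟩
    exact ⟨_, ⟨v 0, rfl, _, ⟨l 0, rfl⟩, rfl⟩, _, ⟨Fin.tail l, rfl⟩,
      (aridWord_succ v w l).symm⟩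
  · rintro ⟨_, ⟨_, rfl, _, ⟨l₀, rfl⟩, rfl⟩, _, ⟨l, rfl⟩, rfl⟩
    refine ⟨Fin.cons l₀ l, ?_⟩
    rw [aridWord_succ]
    rfl

theorem isRegular_aridLang {r : ℕ} (v : Fin (r + 1) → List α) (w : Fin r → List α) :
    (aridLang v w).IsRegular := by
  induction r with
  | zero =>
    rw [aridLang_zero]
    exact Language.isRegular_singleton _
  | succ r ih =>
    rw [aridLang_succ]
    exact ((Language.isRegular_singleton _).mul (Language.isRegular_kstar_singleton _)).mul (ih _ _)

theorem IsArid.isRegular {k r : ℕ} {A : Set (List (Fin k))} (h : IsArid k r A) :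
    Language.IsRegular A := by
  obtain ⟨m, B, hB, rfl⟩ := h
  refine Language.isRegular_iSup fun i => ?_
  obtain ⟨v, w, hvw⟩ := isBasicArid_iff.1 (hB i)
  rw [hvw]
  exact isRegular_aridLang v w

lemma mul_length_le_length_aridWord {r : ℕ} (v : Fin (r + 1) → List α) (w : Fin r → List α)
    (l : Fin r → ℕ) (j : Fin r) : l j * (w j).length ≤ (aridWord v w l).length := by
  have hmem : v j.castSucc ++ wpow (w j) (l j) ∈
      List.ofFn fun i => v i.castSucc ++ wpow (w i) (l i) := List.mem_ofFn.2 ⟨j, rfl⟩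
  have h : wpow (w j) (l j) <:+: aridWord v w l :=
    (List.suffix_append _ _).isInfix.trans <|
      (List.infix_of_mem_flatten hmem).trans (List.prefix_append _ _).isInfix
  simpa using h.length_le

lemma aridWord_min_length {r : ℕ} (v : Fin (r + 1) → List α) (w : Fin r → List α)
    (l : Fin r → ℕ) :
    aridWord v w (fun j => min (l j) (aridWord v w l).length) = aridWord v w l := by
  have h : ∀ j, wpow (w j) (min (l j) (aridWord v w l).length) = wpow (w j) (l j) := by
    intro j
    rcases eq_or_ne (w j) [] with hw | hw
    · simp [hw]
    · rw [min_eq_left ((Nat.le_mul_of_pos_right _ (List.length_pos_iff.2 hw)).trans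
        (mul_length_le_length_aridWord v w l j))]
  simp only [aridWord] at h ⊢
  simp only [h]

theorem IsArid.hasPolynomialGrowth {k r : ℕ} {A : Set (List (Fin k))} (h : IsArid k r A) :
    Language.HasPolynomialGrowth A := by
  obtain ⟨m, B, hB, rfl⟩ := h
  choose v w hvw using fun i => isBasicArid_iff.1 (hB i)
  refine ⟨m, r, fun n => ?_⟩
  set f : Fin m × (Fin r → Fin (n + 1)) → List (Fin k) :=
    fun p => aridWord (v p.1) (w p.1) fun j => p.2 j
  have hsub : {x | x ∈ ⋃ i, B i ∧ x.length = n} ⊆ f '' Set.univ := by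
    rintro x ⟨hx, rfl⟩
    obtain ⟨i, hi⟩ := Set.mem_iUnion.1 hx
    rw [hvw i] at hi
    obtain ⟨l, rfl⟩ := hi
    exact ⟨(i, fun j => ⟨min (l j) (aridWord (v i) (w i) l).length,
      Nat.lt_succ_of_le (min_le_right _ _)⟩), trivial, aridWord_min_length _ _ _⟩
  calc _ ≤ (f '' Set.univ).ncard := Set.ncard_le_ncard hsub (Set.finite_univ.image f)
    _ ≤ (Set.univ : Set (Fin m × (Fin r → Fin (n + 1)))).ncard :=
      Set.ncard_image_le Set.finite_univ
    _ = m * (n + 1) ^ r := by simp [Set.ncard_univ]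

lemma isBasicArid_one {k : ℕ} (v u z : List (Fin k)) :
    IsBasicArid k 1 {x | ∃ l : ℕ, x = v ++ wpow z l ++ u} := by
  refine isBasicArid_iff.2 ⟨![v, u], ![z], Set.ext fun x => ?_⟩
  have h : ∀ l : Fin 1 → ℕ, aridWord ![v, u] ![z] l = v ++ wpow z (l 0) ++ u := by
    simp [aridWord, Fin.last]
  show (∃ l : ℕ, x = v ++ wpow z l ++ u) ↔ ∃ l, aridWord ![v, u] ![z] l = x
  simp only [h]
  exact ⟨fun ⟨l, hl⟩ => ⟨fun _ => l, hl.symm⟩, fun ⟨l, hl⟩ => ⟨l 0, hl.symm⟩⟩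

end Arid

theorem stmt_16_general (k : ℕ) (A : Set (List (Fin k)))
    (hA : ∃ r : ℕ, IsArid k r A) (hinf : A.Infinite) :
    ∃ (v : List (Fin k)) (p : ℕ) (w : List (Fin k)) (u : Fin p → List (Fin k)),
      1 ≤ p ∧ w ≠ [] ∧
      {x ∈ A | v <+: x} = (⋃ i : Fin p, {x | ∃ l : ℕ, x = v ++ wpow w l ++ u i}) ∧
      IsArid k 1 {x ∈ A | v <+: x} := by
  obtain ⟨r, hAr⟩ := hA
  obtain ⟨v, z, R, hz, hRfin, hRne, hvR⟩ :=
    Language.exists_leftQuotient_eq_wpow_append hAr.isRegular hAr.hasPolynomialGrowth hinf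
  obtain ⟨p, u, rfl⟩ := hRfin.fin_embedding
  obtain ⟨_, i₀, -⟩ := hRne
  have hslice :
      {x ∈ A | v <+: x} = ⋃ i : Fin p, {x | ∃ l : ℕ, x = v ++ wpow z l ++ u i} := by
    ext x
    simp only [Set.mem_ofPred_eq, Set.mem_iUnion]
    constructor
    · rintro ⟨hx, y, rfl⟩
      obtain ⟨l, _, ⟨i, rfl⟩, rfl⟩ := (hvR y).1 hx
      exact ⟨i, l, by simp⟩
    · rintro ⟨i, l, rfl⟩
      rw [List.append_assoc]
      exact ⟨(hvR _).2 ⟨l, u i, ⟨i, rfl⟩, rfl⟩, List.prefix_append _ _⟩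
  exact ⟨v, p, z, u, i₀.pos, hz, hslice, p, _, fun i => isBasicArid_one v (u i) z, hslice⟩

/-- If `A ⊆ Σ_k^*` is an infinite `k`-arid set, then there is a word `v`
such that `A ∩ v Σ_k^* = ⋃_{i=1}^{p} {v w^l u_i : l ∈ ℕ}` with `p ≥ 1` and `w ≠ ε`;
in particular `A ∩ v Σ_k^*` is `k`-arid of rank `≤ 1`. -/
theorem stmt_16 (k : ℕ) (hk : 2 ≤ k) (A : Set (List (Fin k)))
    (hA : ∃ r : ℕ, IsArid k r A) (hinf : A.Infinite) :
    ∃ (v : List (Fin k)) (p : ℕ) (w : List (Fin k)) (u : Fin p → List (Fin k)),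
      1 ≤ p ∧ w ≠ [] ∧
      {x ∈ A | v <+: x} = (⋃ i : Fin p, {x | ∃ l : ℕ, x = v ++ wpow w l ++ u i}) ∧
      IsArid k 1 {x ∈ A | v <+: x} :=
  stmt_16_general k A hA hinf
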